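/- arXiv:1304.2986 — 2 statements merged into one kernel-verified Lean document; each statement's English description precedes it below -/
import Mathlib

section
/- For a finite linear combination f = ∑_{j=1}^{n} θ_j g_j, where g_1,...,g_{k+1} are the monomials 1, x, ..., x^k and g_{k+1+j}(x) = (x - t_j)^k 1{x ≥ t_j} for distinct knots t_1 < ... < t_{n-k-1} in (0,1), the total variation of the k-th weak derivative of f equals k! · ∑_{j=k+2}^{n} |θ_j|. -/
/-!
Write `k = n + 1`. Against the Taylor kernel `(x - u) ^ n / n!`, the constant `1` integrates over
`[0, x]` to `x ^ (n + 1) / (n + 1)!` and the jump `1{u ≥ t}` to the truncated power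
`(x - t) ^ (n + 1) / (n + 1)!`, which gives the representation of `f`. The function `s` is a step
function with jump `k! b_j` at `t_j`: splitting it into its steps bounds its variation by
`∑ |k! b_j|`, and evaluating it at each knot and at a point just to its left gives a partition on
which this bound is attained.
-/

open Nat MeasureTheory Set

section Variation

variable {α E : Type*} [LinearOrder α]

theorem eVariationOn_add_le [SeminormedAddCommGroup E] (f g : α → E) (s : Set α) :
    eVariationOn (f + g) s ≤ eVariationOn f s + eVariationOn g s := by
  refine iSup_le fun ⟨n, u, hu, us⟩ => ?_
  calc ∑ i ∈ Finset.range n, edist ((f + g) (u (i + 1))) ((f + g) (u i))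
      ≤ ∑ i ∈ Finset.range n,
          (edist (f (u (i + 1))) (f (u i)) + edist (g (u (i + 1))) (g (u i))) :=
        Finset.sum_le_sum fun i _ => edist_add_add_le _ _ _ _
    _ ≤ eVariationOn f s + eVariationOn g s := by
        rw [Finset.sum_add_distrib]
        exact add_le_add (eVariationOn.sum_le hu us) (eVariationOn.sum_le hu us)

theorem eVariationOn_finset_sum_le [SeminormedAddCommGroup E] {ι : Type*} (S : Finset ι)
    (f : ι → α → E) (s : Set α) :
    eVariationOn (∑ i ∈ S, f i) s ≤ ∑ i ∈ S, eVariationOn (f i) s := by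
  classical
  induction S using Finset.induction_on with
  | empty => simp [eVariationOn.eq_zero_iff]
  | insert i S hi ih =>
    rw [Finset.sum_insert hi, Finset.sum_insert hi]
    exact (eVariationOn_add_le _ _ s).trans (by gcongr)

theorem MonotoneOn.eVariationOn_le_of_mapsTo {f : α → ℝ} {s : Set α} {m M : ℝ}
    (hf : MonotoneOn f s) (hfs : MapsTo f s (Icc m M)) :
    eVariationOn f s ≤ ENNReal.ofReal (M - m) := by
  rw [eVariationOn.eq_biSup_inter_Icc]
  simp only [mem_ofPred_eq, iSup_le_iff, and_imp, Prod.forall]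
  intro a b as bs _
  rw [hf.eVariationOn_eq as bs]
  exact ENNReal.ofReal_le_ofReal (sub_le_sub (hfs bs).2 (hfs as).1)

theorem sum_edist_le_eVariationOn [PseudoEMetricSpace E] (f : α → E) {s : Set α} {n : ℕ}
    (a b : Fin n → α) (hab : ∀ i, a i ≤ b i) (hba : ∀ i j, i < j → b i ≤ a j)
    (has : ∀ i, a i ∈ s) (hbs : ∀ i, b i ∈ s) :
    ∑ i, edist (f (b i)) (f (a i)) ≤ eVariationOn f s := by
  induction n generalizing s with
  | zero => simp
  | succ n ih =>
    set c := a (Fin.last n)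
    have hbc : ∀ i : Fin n, b i.castSucc ≤ c := fun i => hba _ _ (Fin.castSucc_lt_last i)
    rw [Fin.sum_univ_castSucc]
    calc _ ≤ eVariationOn f (s ∩ Iic c) + eVariationOn f (s ∩ Ici c) := by
          gcongr
          · exact ih (a ∘ Fin.castSucc) (b ∘ Fin.castSucc) (fun i => hab _)
              (fun i j hij => hba _ _ (Fin.castSucc_lt_castSucc_iff.2 hij))
              (fun i => ⟨has _, (hab _).trans (hbc i)⟩) (fun i => ⟨hbs _, hbc i⟩)
          · exact eVariationOn.edist_le f ⟨hbs _, hab _⟩ ⟨has _, le_rfl⟩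
      _ ≤ eVariationOn f ((s ∩ Iic c) ∪ (s ∩ Ici c)) :=
          eVariationOn.add_le_union f fun x hx y hy => hx.2.trans hy.2
      _ = eVariationOn f s := by rw [← inter_union_distrib_left, Iic_union_Ici, inter_univ]

end Variation

section StepFunction

variable {α : Type*} [LinearOrder α]

theorem monotone_ite_le_one_zero (c : α) : Monotone fun x : α => if c ≤ x then (1 : ℝ) else 0 :=
  fun x y hxy => by
    dsimp only
    split_ifs with hx hy <;> first | exact absurd (hx.trans hxy) hy | norm_num

theorem eVariationOn_mul_ite_le (c : α) (d : ℝ) (s : Set α) :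
    eVariationOn (fun x => d * if c ≤ x then (1 : ℝ) else 0) s ≤ ENNReal.ofReal |d| := by
  have hχ : eVariationOn (fun x : α => if c ≤ x then (1 : ℝ) else 0) s ≤ 1 := by
    simpa using ((monotone_ite_le_one_zero c).monotoneOn s).eVariationOn_le_of_mapsTo
      (m := 0) (M := 1) fun x _ => by split_ifs <;> norm_num
  calc eVariationOn ((d * ·) ∘ fun x => if c ≤ x then (1 : ℝ) else 0) s
      ≤ ‖d‖₊ * eVariationOn (fun x : α => if c ≤ x then (1 : ℝ) else 0) s :=
        (lipschitzWith_smul d).lipschitzOnWith.comp_eVariationOn_le (mapsTo_univ _ _)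
    _ ≤ ‖d‖₊ * 1 := by gcongr
    _ = ENNReal.ofReal |d| := by rw [mul_one, ← enorm_eq_nnnorm, Real.enorm_eq_ofReal_abs]

theorem eVariationOn_stepFunction_le {ι : Type*} [Fintype ι] (C : ℝ) (d : ι → ℝ) (t : ι → α)
    (s : Set α) :
    eVariationOn (fun x => C + ∑ i, d i * if t i ≤ x then (1 : ℝ) else 0) s ≤
      ENNReal.ofReal (∑ i, |d i|) := by
  set g : ι → α → ℝ := fun i x => d i * if t i ≤ x then (1 : ℝ) else 0
  have hsplit : (fun x => C + ∑ i, g i x) = (fun _ => C) + ∑ i, g i := by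
    ext x
    simp [Finset.sum_apply]
  have hC : eVariationOn (fun _ : α => C) s = 0 :=
    (eVariationOn.eq_zero_iff _).2 fun _ _ _ _ => edist_self C
  rw [hsplit, ENNReal.ofReal_sum_of_nonneg fun i _ => abs_nonneg (d i)]
  calc _ ≤ eVariationOn (fun _ => C) s + eVariationOn (∑ i, g i) s := eVariationOn_add_le _ _ s
    _ ≤ ∑ i, eVariationOn (g i) s := by
        rw [hC, zero_add]
        exact eVariationOn_finset_sum_le _ _ s
    _ ≤ _ := Finset.sum_le_sum fun i _ => eVariationOn_mul_ite_le (t i) (d i) s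

theorem exists_mem_Ioo_forall_le_iff_lt [DenselyOrdered α] {ι : Type*} [Finite ι] (t : ι → α)
    {a x : α} (hax : a < x) : ∃ m ∈ Ioo a x, ∀ i, t i ≤ m ↔ t i < x := by
  classical
  have := Fintype.ofFinite ι
  set S := insert a ((Finset.univ.filter fun i => t i < x).image t)
  have hSx : ∀ y ∈ S, y < x := by simp [S, hax]
  obtain ⟨m, hSm, hmx⟩ := exists_between ((S.max'_lt_iff (Finset.insert_nonempty _ _)).2 hSx)
  have hmem : ∀ i, t i < x → t i ∈ S := fun i h =>
    Finset.mem_insert_of_mem (Finset.mem_image_of_mem t (by simpa using h))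
  refine ⟨m, ⟨(S.le_max' a (Finset.mem_insert_self _ _)).trans_lt hSm, hmx⟩, fun i =>
    ⟨fun h => h.trans_lt hmx, fun h => (S.le_max' _ (hmem i h)).trans hSm.le⟩⟩

theorem stepFunction_sub_stepFunction_eq {ι : Type*} [Fintype ι] (C : ℝ) (d : ι → ℝ) {t : ι → α}
    (ht : Function.Injective t) {j : ι} {m : α} (hm : ∀ i, t i ≤ m ↔ t i < t j) :
    (C + ∑ i, d i * if t i ≤ t j then (1 : ℝ) else 0) -
      (C + ∑ i, d i * if t i ≤ m then (1 : ℝ) else 0) = d j := by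
  classical
  have hjump : ∀ i, ((if t i ≤ t j then (1 : ℝ) else 0) - if t i ≤ m then 1 else 0) =
      if i = j then 1 else 0 := by
    intro i
    simp only [hm, ← ht.eq_iff]
    rcases lt_trichotomy (t i) (t j) with h | h | h
    · simp [h.le, h, h.ne]
    · simp [h]
    · simp [h.not_ge, h.not_gt, h.ne']
  calc _ = ∑ i, d i * ((if t i ≤ t j then (1 : ℝ) else 0) - if t i ≤ m then 1 else 0) := by
        rw [add_sub_add_left_eq_sub, ← Finset.sum_sub_distrib]
        simp only [mul_sub]
    _ = d j := by simp [hjump]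

theorem ofReal_sum_abs_le_eVariationOn_stepFunction [DenselyOrdered α] {n : ℕ} (C : ℝ)
    (d : Fin n → ℝ) {t : Fin n → α} (ht : StrictMono t) {a b : α} (hts : ∀ i, t i ∈ Ioc a b) :
    ENNReal.ofReal (∑ i, |d i|) ≤
      eVariationOn (fun x => C + ∑ i, d i * if t i ≤ x then (1 : ℝ) else 0) (Icc a b) := by
  choose m hm hmt using fun i => exists_mem_Ioo_forall_le_iff_lt t (hts i).1
  calc ENNReal.ofReal (∑ i, |d i|)
      = ∑ i, edist (C + ∑ l, d l * if t l ≤ t i then (1 : ℝ) else 0)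
          (C + ∑ l, d l * if t l ≤ m i then (1 : ℝ) else 0) := by
        rw [ENNReal.ofReal_sum_of_nonneg fun i _ => abs_nonneg (d i)]
        refine Finset.sum_congr rfl fun i _ => ?_
        rw [edist_dist, Real.dist_eq, stepFunction_sub_stepFunction_eq C d ht.injective (hmt i)]
    _ ≤ _ := sum_edist_le_eVariationOn (s := Icc a b) _ m t (fun i => (hm i).2.le)
        (fun i j hij => (hmt j i).2 (ht hij))
        (fun i => ⟨(hm i).1.le, (hm i).2.le.trans (hts i).2⟩) (fun i => Ioc_subset_Icc_self (hts i))

end StepFunction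

section TaylorKernel

theorem integral_pow_sub_div_factorial (n : ℕ) (c x : ℝ) :
    ∫ u in c..x, (x - u) ^ n / n ! = (x - c) ^ (n + 1) / (n + 1)! := by
  rw [intervalIntegral.integral_div, intervalIntegral.integral_comp_sub_left (· ^ n) x, sub_self,
    integral_pow, factorial_succ]
  push_cast
  field_simp
  ring

theorem integral_ite_le_mul {a c : ℝ} (hac : a < c) (x : ℝ) (g : ℝ → ℝ) :
    ∫ u in a..x, (if c ≤ u then (1 : ℝ) else 0) * g u = if c ≤ x then ∫ u in c..x, g u else 0 := by
  have hind : (fun u => (if c ≤ u then (1 : ℝ) else 0) * g u) = (Ici c).indicator g := by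
    ext u
    by_cases hu : c ≤ u <;> simp [hu]
  split_ifs with hcx
  · have hIcc : Ioc a x ∩ Ici c = Icc c x := by
      ext u
      simp only [mem_inter_iff, mem_Ioc, mem_Ici, mem_Icc]
      constructor
      · exact fun ⟨⟨_, hux⟩, hcu⟩ => ⟨hcu, hux⟩
      · exact fun ⟨hcu, hux⟩ => ⟨⟨hac.trans_le hcu, hux⟩, hcu⟩
    rw [hind, intervalIntegral.integral_of_le (hac.trans_le hcx).le,
      setIntegral_indicator measurableSet_Ici, hIcc, integral_Icc_eq_integral_Ioc,
      intervalIntegral.integral_of_le hcx]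
  · refine intervalIntegral.integral_zero_ae (Filter.Eventually.of_forall fun u hu => ?_)
    have : ¬c ≤ u := by
      rw [uIoc, mem_Ioc] at hu
      push Not at hcx ⊢
      exact hu.2.trans_lt (max_lt hac hcx)
    simp [this]

theorem integral_stepFunction_mul_pow_sub_div_factorial {ι : Type*} [Fintype ι] (n : ℕ) (C : ℝ)
    (d : ι → ℝ) {t : ι → ℝ} (ht : ∀ i, 0 < t i) (x : ℝ) :
    ∫ u in (0 : ℝ)..x, (C + ∑ i, d i * if t i ≤ u then (1 : ℝ) else 0) * (x - u) ^ n / n ! =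
      C * (x ^ (n + 1) / (n + 1)!) +
        ∑ i, d i * if t i ≤ x then (x - t i) ^ (n + 1) / (n + 1)! else 0 := by
  have hK : Continuous fun u : ℝ => (x - u) ^ n / n ! := by fun_prop
  have hint : ∀ i, IntervalIntegrable
      (fun u => (if t i ≤ u then (1 : ℝ) else 0) * ((x - u) ^ n / n !)) volume 0 x :=
    fun i => (monotone_ite_le_one_zero (t i)).intervalIntegrable.mul_continuousOn hK.continuousOn
  have hsplit : ∀ u, (C + ∑ i, d i * if t i ≤ u then (1 : ℝ) else 0) * (x - u) ^ n / n ! =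
      C * ((x - u) ^ n / n !) +
        ∑ i, d i * ((if t i ≤ u then (1 : ℝ) else 0) * ((x - u) ^ n / n !)) := by
    intro u
    simp only [add_mul, Finset.sum_mul, add_div, Finset.sum_div, mul_assoc, mul_div_assoc]
  simp only [hsplit]
  rw [intervalIntegral.integral_add ((hK.intervalIntegrable _ _).const_mul C)
      (by simpa only [Finset.sum_fn] using
        IntervalIntegrable.sum Finset.univ fun i _ => (hint i).const_mul (d i)),
    intervalIntegral.integral_finsetSum fun i _ => (hint i).const_mul _,
    intervalIntegral.integral_const_mul, integral_pow_sub_div_factorial, sub_zero]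
  congr 1
  refine Finset.sum_congr rfl fun i _ => ?_
  rw [intervalIntegral.integral_const_mul, integral_ite_le_mul (ht i),
    integral_pow_sub_div_factorial]

end TaylorKernel

/-- For a finite linear combination `f = ∑ a_j x^j + ∑ b_j (x - t_j)^k 1{x ≥ t_j}` of monomials
of degree at most `k` and truncated power functions with distinct knots `t_1 < ... < t_p` in
`(0,1)`, the `k`-th weak derivative of `f` is the piecewise constant function
`s(x) = k! a_k + k! ∑ b_j 1{x ≥ t_j}` (in the sense that `f` is recovered from `s` by
`k`-fold integration via the Taylor kernel), and its total variation equals `k! ∑_j |b_j|`. -/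
theorem stmt12 (k p : ℕ) (hk : 1 ≤ k) (t : Fin p → ℝ) (ht : StrictMono t)
    (ht' : ∀ i, t i ∈ Set.Ioo (0 : ℝ) 1) (a : Fin (k + 1) → ℝ) (b : Fin p → ℝ) :
    let f : ℝ → ℝ := fun x =>
      (∑ j : Fin (k + 1), a j * x ^ (j : ℕ)) +
        ∑ j : Fin p, b j * (if t j ≤ x then (x - t j) ^ k else 0)
    let s : ℝ → ℝ := fun x =>
      (k ! : ℝ) * a (Fin.last k) + ∑ j : Fin p, (k ! : ℝ) * b j * (if t j ≤ x then 1 else 0)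
    (∀ x ∈ Set.Icc (0 : ℝ) 1,
        f x = (∑ j : Fin k, a j.castSucc * x ^ (j : ℕ)) +
          ∫ u in (0 : ℝ)..x, s u * (x - u) ^ (k - 1) / (k - 1)!) ∧
      eVariationOn s (Set.Icc 0 1) = ENNReal.ofReal ((k ! : ℝ) * ∑ j : Fin p, |b j|) := by
  intro f s
  obtain ⟨n, rfl⟩ : ∃ n, k = n + 1 := ⟨k - 1, by omega⟩
  refine ⟨fun x _ => ?_, ?_⟩
  · simp only [f, s, Nat.add_sub_cancel]
    rw [integral_stepFunction_mul_pow_sub_div_factorial n _ _ (fun i => (ht' i).1),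
      Fin.sum_univ_castSucc]
    simp only [Fin.val_last, Fin.val_castSucc, mul_ite, mul_zero]
    field_simp
    ring
  · have hsum : ∑ j, |((n + 1)! : ℝ) * b j| = (n + 1)! * ∑ j, |b j| := by
      simp [abs_mul, Finset.mul_sum]
    rw [← hsum]
    exact le_antisymm (eVariationOn_stepFunction_le _ _ t _)
      (ofReal_sum_abs_le_eVariationOn_stepFunction _ _ ht fun i => Ioo_subset_Ioc_self (ht' i))
end

section
/- The lasso (and generalized lasso) fitted value map is nonexpansive in the response: for fixed X ∈ ℝ^{n×p} and λ ≥ 0, if β̂(y) denotes any minimizer of (1/2)‖y - Xβ‖₂² + λ‖β‖₁, then the fitted value Xβ̂(y) is uniquely determined by y, and ‖Xβ̂(y) - Xβ̂(y')‖₂ ≤ ‖y - y'‖₂ for all y, y' ∈ ℝ^n. -/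
/-!
A minimizer `β` of `½‖y - Aβ‖² + g β`, with `A` linear and `g` convex, satisfies the variational
inequality `⟪y - Aβ, Aβ' - Aβ⟫ ≤ g β' - g β`: compare `β` with the points `β + t (β' - β)` of the
segment to `β'` and let `t → 0⁺`. Adding this inequality for `(y, β)` and for `(y', β')` cancels the
penalty and leaves `‖Aβ - Aβ'‖² ≤ ⟪y - y', Aβ - Aβ'⟫`, so by Cauchy–Schwarz the fit moves by at most
`‖y - y'‖`; for `y = y'` the fits coincide. The lasso is the case `g = λ‖·‖₁`.
-/

open Matrix Filter Topology RealInnerProductSpace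

section PenalizedLeastSquares

variable {E F : Type*} [AddCommGroup E] [Module ℝ E] [NormedAddCommGroup F] [InnerProductSpace ℝ F]

noncomputable def penalizedLeastSquares (A : E →ₗ[ℝ] F) (g : E → ℝ) (y : F) (b : E) : ℝ :=
  1 / 2 * ‖y - A b‖ ^ 2 + g b

variable {A : E →ₗ[ℝ] F} {g : E → ℝ}

theorem inner_residual_le_of_isMinOn (hg : ConvexOn ℝ Set.univ g) {y : F} {β : E}
    (hβ : IsMinOn (penalizedLeastSquares A g y) Set.univ β) (β' : E) :
    ⟪y - A β, A β' - A β⟫ ≤ g β' - g β := by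
  have hsegment : ∀ t : ℝ, 0 < t → t ≤ 1 →
      ⟪y - A β, A β' - A β⟫ ≤ g β' - g β + t / 2 * ‖A β' - A β‖ ^ 2 := by
    intro t ht₀ ht₁
    have hpoint : β + t • (β' - β) = (1 - t) • β + t • β' := by module
    have hconv : g (β + t • (β' - β)) ≤ (1 - t) * g β + t * g β' := by
      rw [hpoint]
      exact hg.2 (Set.mem_univ β) (Set.mem_univ β') (sub_nonneg.2 ht₁) ht₀.le
        (sub_add_cancel 1 t)
    have hres : y - A (β + t • (β' - β)) = (y - A β) - t • (A β' - A β) := by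
      simp only [map_add, map_smul, map_sub]
      abel
    have hmin := isMinOn_univ_iff.1 hβ (β + t • (β' - β))
    rw [penalizedLeastSquares, penalizedLeastSquares, hres, norm_sub_sq_real (y - A β),
      inner_smul_right, norm_smul, Real.norm_eq_abs, abs_of_pos ht₀] at hmin
    nlinarith
  have hlim : Tendsto (fun t : ℝ => g β' - g β + t / 2 * ‖A β' - A β‖ ^ 2) (𝓝[>] 0)
      (𝓝 (g β' - g β)) := by
    refine tendsto_nhdsWithin_of_tendsto_nhds (Continuous.tendsto' ?_ 0 _ (by simp))
    fun_prop
  exact ge_of_tendsto hlim <|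
    eventually_of_mem (Ioc_mem_nhdsGT one_pos) fun t ht => hsegment t ht.1 ht.2

theorem norm_sub_sq_le_inner_of_isMinOn (hg : ConvexOn ℝ Set.univ g) {y y' : F} {β β' : E}
    (hβ : IsMinOn (penalizedLeastSquares A g y) Set.univ β)
    (hβ' : IsMinOn (penalizedLeastSquares A g y') Set.univ β') :
    ‖A β - A β'‖ ^ 2 ≤ ⟪y - y', A β - A β'⟫ := by
  have h := inner_residual_le_of_isMinOn hg hβ β'
  have h' := inner_residual_le_of_isMinOn hg hβ' β
  rw [← real_inner_self_eq_norm_sq]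
  simp only [inner_sub_left, inner_sub_right] at h h' ⊢
  linarith

theorem norm_le_of_norm_sq_le_inner {u v : F} (h : ‖u‖ ^ 2 ≤ ⟪v, u⟫) : ‖u‖ ≤ ‖v‖ := by
  nlinarith [real_inner_le_norm v u, norm_nonneg u, norm_nonneg v]

theorem norm_sub_le_of_isMinOn (hg : ConvexOn ℝ Set.univ g) {y y' : F} {β β' : E}
    (hβ : IsMinOn (penalizedLeastSquares A g y) Set.univ β)
    (hβ' : IsMinOn (penalizedLeastSquares A g y') Set.univ β') :
    ‖A β - A β'‖ ≤ ‖y - y'‖ :=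
  norm_le_of_norm_sq_le_inner (norm_sub_sq_le_inner_of_isMinOn hg hβ hβ')

theorem apply_eq_of_isMinOn (hg : ConvexOn ℝ Set.univ g) {y : F} {β₁ β₂ : E}
    (hβ₁ : IsMinOn (penalizedLeastSquares A g y) Set.univ β₁)
    (hβ₂ : IsMinOn (penalizedLeastSquares A g y) Set.univ β₂) :
    A β₁ = A β₂ := by
  simpa [sub_eq_zero] using norm_sub_le_of_isMinOn hg hβ₁ hβ₂

end PenalizedLeastSquares

theorem convexOn_sum_abs (ι : Type*) [Fintype ι] :
    ConvexOn ℝ Set.univ (fun β : ι → ℝ => ∑ j, |β j|) := by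
  have := (convexOn_norm convex_univ).comp_linearMap
    (WithLp.linearEquiv 1 ℝ (ι → ℝ)).symm.toLinearMap
  simpa [Function.comp_def, PiLp.norm_eq_of_L1] using this

theorem sqrt_sum_sq_sub_eq_norm_sub {ι : Type*} [Fintype ι] (u v : ι → ℝ) :
    √(∑ i, (u i - v i) ^ 2) = ‖WithLp.toLp 2 u - WithLp.toLp 2 v‖ := by
  rw [← WithLp.toLp_sub, ← Real.sqrt_sq (norm_nonneg _), EuclideanSpace.real_norm_sq_eq]
  rfl

/-- The lasso fitted value map is uniquely determined and nonexpansive in the response: for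
fixed `X` and `λ ≥ 0`, any two minimizers of the lasso criterion (for the same `y`) have the
same fitted value `Xβ̂`, and the map `y ↦ Xβ̂(y)` is 1-Lipschitz in the Euclidean norm. -/
theorem stmt17 (n p : ℕ) (X : Matrix (Fin n) (Fin p) ℝ) (lam : ℝ) (hlam : 0 ≤ lam) :
    let F : (Fin n → ℝ) → (Fin p → ℝ) → ℝ := fun y β =>
      (1 / 2) * (∑ i, (y i - (X *ᵥ β) i) ^ 2) + lam * ∑ j, |β j|
    (∀ (y : Fin n → ℝ) (β₁ β₂ : Fin p → ℝ),
        (∀ β, F y β₁ ≤ F y β) → (∀ β, F y β₂ ≤ F y β) → X *ᵥ β₁ = X *ᵥ β₂) ∧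
      (∀ (y y' : Fin n → ℝ) (β β' : Fin p → ℝ),
        (∀ b, F y β ≤ F y b) → (∀ b, F y' β' ≤ F y' b) →
          Real.sqrt (∑ i, ((X *ᵥ β) i - (X *ᵥ β') i) ^ 2) ≤
            Real.sqrt (∑ i, (y i - y' i) ^ 2)) := by
  intro F
  let A := (WithLp.linearEquiv 2 ℝ (Fin n → ℝ)).symm.toLinearMap ∘ₗ X.mulVecLin
  let g : (Fin p → ℝ) → ℝ := fun β => lam * ∑ j, |β j|
  have hg : ConvexOn ℝ Set.univ g := (convexOn_sum_abs (Fin p)).smul hlam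
  have hF : ∀ y β, F y β = penalizedLeastSquares A g (WithLp.toLp 2 y) β := by
    intro y β
    rw [penalizedLeastSquares, ← sqrt_sum_sq_sub_eq_norm_sub, Real.sq_sqrt (by positivity)]
    rfl
  simp only [hF]
  refine ⟨fun y β₁ β₂ hβ₁ hβ₂ => ?_, fun y y' β β' hβ hβ' => ?_⟩
  · exact WithLp.toLp_injective 2 <|
      apply_eq_of_isMinOn hg (isMinOn_univ_iff.2 hβ₁) (isMinOn_univ_iff.2 hβ₂)
  · rw [sqrt_sum_sq_sub_eq_norm_sub, sqrt_sum_sq_sub_eq_norm_sub]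
    exact norm_sub_le_of_isMinOn hg (isMinOn_univ_iff.2 hβ)
      (isMinOn_univ_iff.2 hβ')
end
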